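/- Let A = !![0, exp(I*π/4); exp(-I*π/4), 0], B = !![0, exp(-I*π/4); exp(I*π/4), 0], and let ψ = (1/√2) • ![1, 1] be a unit vector in ℂ². With 𝒜(ρ) = (Aρ + ρA)/2 and 𝒝 analogous, and ρ = outer product of ψ with itself, one has Tr(ρ * 𝒜(1)) + Tr(ρ * 𝒝(1)) - Tr(ρ * 𝒜(𝒝(1))) = √2. -/

import Mathlib

open Complex Matrix

noncomputable def Aobs : Matrix (Fin 2) (Fin 2) ℂ :=
  !![0, Complex.exp (Complex.I * Real.pi / 4);
     Complex.exp (-(Complex.I * Real.pi / 4)), 0]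

noncomputable def Bobs : Matrix (Fin 2) (Fin 2) ℂ :=
  !![0, Complex.exp (-(Complex.I * Real.pi / 4));
     Complex.exp (Complex.I * Real.pi / 4), 0]

noncomputable def ψ : Fin 2 → ℂ := (1 / (Real.sqrt 2 : ℂ)) • ![1, 1]

noncomputable def ρ0 : Matrix (Fin 2) (Fin 2) ℂ := Matrix.vecMulVec ψ (star ψ)

noncomputable def sop (M σ : Matrix (Fin 2) (Fin 2) ℂ) : Matrix (Fin 2) (Fin 2) ℂ :=
  (1 / 2 : ℂ) • (M * σ + σ * M)

theorem leggett_garg_quantum_value :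
    (ρ0 * sop Aobs 1).trace + (ρ0 * sop Bobs 1).trace
      - (ρ0 * sop Aobs (sop Bobs 1)).trace = (Real.sqrt 2 : ℂ) := by
  have h1 : Complex.exp (Complex.I * Real.pi / 4) *
      Complex.exp (-(Complex.I * Real.pi / 4)) = 1 := by
    rw [← Complex.exp_add]; simp
  have h2 : Complex.exp (Complex.I * Real.pi / 4) +
      Complex.exp (-(Complex.I * Real.pi / 4)) = (Real.sqrt 2 : ℂ) := by
    have e1 : Complex.I * Real.pi / 4 = ((Real.pi / 4 : ℝ) : ℂ) * Complex.I := by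
      push_cast; ring
    have e2 : -(Complex.I * Real.pi / 4) = ((-(Real.pi / 4) : ℝ) : ℂ) * Complex.I := by
      push_cast; ring
    rw [e2, e1, Complex.exp_mul_I, Complex.exp_mul_I, Complex.ofReal_neg,
      Complex.cos_neg, Complex.sin_neg]
    have : Complex.cos ((Real.pi / 4 : ℝ) : ℂ) = ((Real.sqrt 2 / 2 : ℝ) : ℂ) := by
      rw [← Complex.ofReal_cos, Real.cos_pi_div_four]
    rw [this]
    push_cast
    ring
  have hs : ((Real.sqrt 2 : ℂ))^2 = 2 := by
    rw [← Complex.ofReal_pow, Real.sq_sqrt (by norm_num : (0:ℝ) ≤ 2)]; norm_num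
  have hstar : star ((Real.sqrt 2 : ℂ)) = (Real.sqrt 2 : ℂ) := by
    simp [Complex.star_def, Complex.conj_ofReal]
  have hne : (Real.sqrt 2 : ℂ) ≠ 0 := by
    intro h
    have := hs
    rw [h] at this
    norm_num at this
  simp only [ρ0, sop, Aobs, Bobs, ψ, Matrix.trace, Matrix.mul_apply,
    Fin.sum_univ_two, Matrix.diag, Matrix.vecMulVec_apply, Matrix.smul_apply,
    Matrix.add_apply, Matrix.one_apply, Matrix.of_apply, Matrix.cons_val',
    Matrix.cons_val_zero, Matrix.cons_val_one, Matrix.head_cons,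
    Matrix.head_fin_const, Pi.smul_apply, Pi.star_apply, smul_eq_mul,
    Matrix.cons_val_fin_one, Matrix.empty_val', star_one, if_true, star_div₀,
    hstar, one_div]
  norm_num
  field_simp
  linear_combination
      (8 - 4 * (Complex.exp (Complex.I * Real.pi / 4) + Complex.exp (-(Complex.I * Real.pi / 4))
          + (Real.sqrt 2:ℂ))) * h2
    + 8 * h1
    + (-4 * (Real.sqrt 2:ℂ) - 4) * hs
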